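/- arXiv:0710.0006 — 5 statements merged into one kernel-verified Lean document; each statement's English description precedes it below -/
import Mathlib

section
/- Suppose a T-periodic 2×2 linear system u' = A(t) u has monodromy matrix X(T) (with X(0) = I) whose eigenvalue +1 has algebraic multiplicity 2, and suppose ũ is a T-periodic solution with ũ₁(0) = 0 and ũ₂(0) ≠ 0. Then for the solution û with û₁(0) ≠ 0, û₂(0) = 0, one has û(t+T) = û(t) + (û₂(T)/ũ₂(0)) · ũ(t) for all t ∈ ℝ. -/
/-!
Every solution `v` is `t ↦ X t *ᵥ v(0)`, so the periodicity of `ũ` makes `ũ(0) = (0, b)`, `b ≠ 0`, a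
fixed vector of the monodromy matrix `M = X(T)`. Since `1` is a double eigenvalue, `tr M = 2`, and
together these force the first row of `M` to be `(1, 0)`; hence `M û(0) = û(0) + c ũ(0)` with
`c = û₂(T)/ũ₂(0)`. Both sides of the claimed identity are solutions (the left one because `A` is
`T`-periodic) and agree at `t = 0`, so they coincide by uniqueness.
-/

open Matrix

namespace Matrix

section LinearODE

variable {n : Type*} [Fintype n] {A : ℝ → Matrix n n ℝ}

open scoped Matrix.Norms.Operator in
theorem lipschitzWith_mulVec {m : Type*} [Fintype m] (M : Matrix m n ℝ) :
    LipschitzWith ‖M‖₊ (M *ᵥ ·) :=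
  LipschitzWith.of_dist_le_mul fun x y => by
    simpa only [dist_eq_norm, ← mulVec_sub, coe_nnnorm] using linfty_opNorm_mulVec M (x - y)

open scoped Matrix.Norms.Operator in
theorem linearODE_solution_unique (hA : Continuous A) {f g : ℝ → n → ℝ}
    (hf : ∀ t, HasDerivAt f (A t *ᵥ f t) t) (hg : ∀ t, HasDerivAt g (A t *ᵥ g t) t)
    {t₀ : ℝ} (h : f t₀ = g t₀) : f = g := by
  ext1 t
  obtain ⟨a, b, ht, ht₀⟩ : ∃ a b, t ∈ Set.Ioo a b ∧ t₀ ∈ Set.Ioo a b :=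
    ⟨min t t₀ - 1, max t t₀ + 1, by grind⟩
  obtain ⟨K, hK⟩ := isCompact_Icc.exists_bound_of_continuousOn hA.continuousOn
  have hlip : ∀ s ∈ Set.Ioo a b, LipschitzOnWith K.toNNReal (A s *ᵥ ·) Set.univ := fun s hs =>
    ((lipschitzWith_mulVec (A s)).weaken <| by
      rw [← NNReal.coe_le_coe, coe_nnnorm]
      exact (hK s (Set.Ioo_subset_Icc_self hs)).trans (Real.le_coe_toNNReal K)).lipschitzOnWith
  exact ODE_solution_unique_of_mem_Ioo hlip ht₀ (fun s _ => ⟨hf s, trivial⟩)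
    (fun s _ => ⟨hg s, trivial⟩) h ht

theorem hasDerivAt_mulVec_of_hasDerivAt_apply {m : Type*} {X : ℝ → Matrix m n ℝ}
    {X' : Matrix m n ℝ} {t : ℝ} (hX : ∀ i j, HasDerivAt (fun s => X s i j) (X' i j) t)
    (c : n → ℝ) : HasDerivAt (fun s => X s *ᵥ c) (X' *ᵥ c) t := by
  rw [hasDerivAt_pi]
  intro i
  simp only [mulVec, dotProduct]
  exact HasDerivAt.fun_sum fun j _ => (hX i j).mul_const (c j)

theorem linearODE_solution_eq_mulVec [DecidableEq n] (hA : Continuous A)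
    {X : ℝ → Matrix n n ℝ} (hX : ∀ t i j, HasDerivAt (fun s => X s i j) ((A t * X t) i j) t)
    {t₀ : ℝ} (hX₀ : X t₀ = 1) {f : ℝ → n → ℝ} (hf : ∀ t, HasDerivAt f (A t *ᵥ f t) t) (t : ℝ) :
    f t = X t *ᵥ f t₀ := by
  refine congrFun (linearODE_solution_unique hA hf (g := fun s => X s *ᵥ f t₀) (fun s => ?_)
    (t₀ := t₀) ?_) t
  · simpa only [mulVec_mulVec] using hasDerivAt_mulVec_of_hasDerivAt_apply (hX s) (f t₀)
  · simp [hX₀]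

theorem linearODE_solution_comp_add_period {T : ℝ} (hAper : ∀ t, A (t + T) = A t) {f : ℝ → n → ℝ}
    (hf : ∀ t, HasDerivAt f (A t *ᵥ f t) t) (t : ℝ) :
    HasDerivAt (fun s => f (s + T)) (A t *ᵥ f (t + T)) t := by
  simpa only [hAper] using (hf (t + T)).comp_add_const t T

theorem linearODE_solution_add_smul {f g : ℝ → n → ℝ} (hf : ∀ t, HasDerivAt f (A t *ᵥ f t) t)
    (hg : ∀ t, HasDerivAt g (A t *ᵥ g t) t) (c : ℝ) (t : ℝ) :
    HasDerivAt (fun s => f s + c • g s) (A t *ᵥ (f t + c • g t)) t := by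
  rw [mulVec_add, mulVec_smul]
  exact (hf t).add ((hg t).const_smul c)

end LinearODE

theorem trace_eq_of_charpoly_eq_X_sub_C_pow {n R : Type*} [Fintype n] [DecidableEq n]
    [CommRing R] {M : Matrix n n R} {a : R} {k : ℕ}
    (h : M.charpoly = (Polynomial.X - Polynomial.C a) ^ k) : M.trace = k • a := by
  rw [trace_eq_neg_charpoly_nextCoeff, h, (Polynomial.monic_X_sub_C a).nextCoeff_pow,
    Polynomial.nextCoeff_X_sub_C]
  simp

section FinTwo

variable {K : Type*} [Field K] {M : Matrix (Fin 2) (Fin 2) K} {v w : Fin 2 → K}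

theorem mulVec_eq_add_smul_of_trace_eq_two (hM : M.trace = 2) (hv : M *ᵥ v = v) (hv0 : v 0 = 0)
    (hv1 : v 1 ≠ 0) (hw1 : w 1 = 0) : M *ᵥ w = w + ((M *ᵥ w) 1 / v 1) • v := by
  have h0 := congrFun hv 0
  have h1 := congrFun hv 1
  simp only [mulVec, dotProduct, Fin.sum_univ_two, hv0, mul_zero, zero_add] at h0 h1
  rw [trace_fin_two] at hM
  have h11 : M 1 1 = 1 := by rw [← mul_left_inj' hv1, h1, one_mul]
  have h00 : M 0 0 = 1 := by linear_combination hM - h11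
  have h01 : M 0 1 = 0 := (mul_eq_zero.mp h0).resolve_right hv1
  ext i
  fin_cases i
  · simp [mulVec, dotProduct, Fin.sum_univ_two, h00, h01, hv0]
  · simp [hw1, div_mul_cancel₀ _ hv1]

end FinTwo

end Matrix

theorem monodromy_multiplicity_two_general (T : ℝ)
    (A : ℝ → Matrix (Fin 2) (Fin 2) ℝ) (hA : Continuous A)
    (hAper : ∀ t, A (t + T) = A t)
    (X : ℝ → Matrix (Fin 2) (Fin 2) ℝ)
    (hX : ∀ t, ∀ i j, HasDerivAt (fun s => X s i j) ((A t * X t) i j) t)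
    (hX0 : X 0 = 1)
    (hchar : (X T).charpoly = (Polynomial.X - 1) ^ 2)
    (u hu_ : ℝ → Fin 2 → ℝ)
    (hu : ∀ t, HasDerivAt u ((A t).mulVec (u t)) t)
    (huper : ∀ t, u (t + T) = u t)
    (hu1 : u 0 0 = 0) (hu2 : u 0 1 ≠ 0)
    (hhu : ∀ t, HasDerivAt hu_ ((A t).mulVec (hu_ t)) t)
    (hhu2 : hu_ 0 1 = 0) :
    ∀ t, hu_ (t + T) = hu_ t + (hu_ T 1 / u 0 1) • u t := by
  have htrace : (X T).trace = 2 := by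
    rw [trace_eq_of_charpoly_eq_X_sub_C_pow (a := 1) (k := 2) (by rw [map_one, hchar])]
    norm_num
  have hfix : X T *ᵥ u 0 = u 0 := by
    rw [← linearODE_solution_eq_mulVec hA hX hX0 hu, ← zero_add T, huper]
  have hmonodromy : hu_ (0 + T) = hu_ 0 + (hu_ T 1 / u 0 1) • u 0 := by
    rw [zero_add, linearODE_solution_eq_mulVec hA hX hX0 hhu]
    exact mulVec_eq_add_smul_of_trace_eq_two htrace hfix hu1 hu2 hhu2
  exact congrFun <| linearODE_solution_unique hA (linearODE_solution_comp_add_period hAper hhu)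
    (linearODE_solution_add_smul hhu hu _) hmonodromy

/-- If the monodromy matrix of a `T`-periodic planar linear system has eigenvalue `+1`
of algebraic multiplicity 2, `ũ` is a `T`-periodic solution with `ũ₁(0) = 0`, `ũ₂(0) ≠ 0`,
and `û` is a solution with `û₁(0) ≠ 0`, `û₂(0) = 0`, then
`û(t+T) = û(t) + (û₂(T)/ũ₂(0)) ũ(t)` for all `t`. -/
theorem monodromy_multiplicity_two (T : ℝ) (hT : 0 < T)
    (A : ℝ → Matrix (Fin 2) (Fin 2) ℝ) (hA : Continuous A)
    (hAper : ∀ t, A (t + T) = A t)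
    (X : ℝ → Matrix (Fin 2) (Fin 2) ℝ)
    (hX : ∀ t, ∀ i j, HasDerivAt (fun s => X s i j) ((A t * X t) i j) t)
    (hX0 : X 0 = 1)
    (hchar : (X T).charpoly = (Polynomial.X - 1) ^ 2)
    (u hu_ : ℝ → Fin 2 → ℝ)
    (hu : ∀ t, HasDerivAt u ((A t).mulVec (u t)) t)
    (huper : ∀ t, u (t + T) = u t)
    (hu1 : u 0 0 = 0) (hu2 : u 0 1 ≠ 0)
    (hhu : ∀ t, HasDerivAt hu_ ((A t).mulVec (hu_ t)) t)
    (hhu1 : hu_ 0 0 ≠ 0) (hhu2 : hu_ 0 1 = 0) :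
    ∀ t, hu_ (t + T) = hu_ t + (hu_ T 1 / u 0 1) • u t :=
  monodromy_multiplicity_two_general T A hA hAper X hX hX0 hchar u hu_ hu huper hu1 hu2 hhu hhu2
end

section
/- Let x̃(t) = √(1-w)·(sin(wt), cos(wt)) with 0 < w < 1 and g(t, x) = (0, sin(wt)). Then the Melnikov-type function M_E(θ) = ∫₀^{2π/w} det[ x̃'(τ) , g(τ-θ, x̃(τ)) ] dτ equals -π√(1-w)·sin(wθ), and it has exactly two zeros θ₁ = 0 and θ₂ = π/w on [0, 2π/w). -/
/-! Substituting u = wτ reduces the Melnikov integral to ∫₀^{2π} cos u · sin(u - wθ) du; expanding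
sin(u - wθ), the term sin u cos u integrates to 0 over a period and cos² u to π. -/

open Real

theorem integral_cos_mul_sin_sub_zero_two_pi (φ : ℝ) :
    ∫ u in (0:ℝ)..2 * π, cos u * sin (u - φ) = -(π * sin φ) := by
  have hexpand : ∀ u, cos u * sin (u - φ) = cos φ * (sin u * cos u) - sin φ * cos u ^ 2 := by
    intro u; rw [sin_sub]; ring
  simp_rw [hexpand]
  rw [intervalIntegral.integral_sub, intervalIntegral.integral_const_mul,
    intervalIntegral.integral_const_mul, integral_sin_mul_cos₁, integral_cos_sq]
  · simp only [sin_two_pi, cos_two_pi, sin_zero, cos_zero]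
    ring
  all_goals exact (by fun_prop : Continuous _).intervalIntegrable _ _

theorem integral_cos_mul_sin_sub_over_period {w : ℝ} (hw : w ≠ 0) (θ : ℝ) :
    ∫ τ in (0:ℝ)..2 * π / w, cos (w * τ) * sin (w * (τ - θ)) = -(π / w * sin (w * θ)) := by
  have hshift : ∀ τ, w * (τ - θ) = w * τ - w * θ := fun τ => mul_sub w τ θ
  simp_rw [hshift]
  rw [intervalIntegral.integral_comp_mul_left (fun u => cos u * sin (u - w * θ)) hw,
    mul_zero, mul_div_cancel₀ _ hw, integral_cos_mul_sin_sub_zero_two_pi, smul_eq_mul]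
  ring

theorem sin_eq_zero_iff_of_mem_Ico {x : ℝ} (hx : x ∈ Set.Ico 0 (2 * π)) :
    sin x = 0 ↔ x = 0 ∨ x = π := by
  constructor
  · intro h
    obtain ⟨n, rfl⟩ := sin_eq_zero_iff.mp h
    have hn0 : 0 ≤ n := by exact_mod_cast nonneg_of_mul_nonneg_left hx.1 pi_pos
    have hn2 : n < 2 := by exact_mod_cast lt_of_mul_lt_mul_right hx.2 pi_pos.le
    obtain rfl | rfl : n = 0 ∨ n = 1 := by omega
    all_goals simp
  · rintro (rfl | rfl) <;> simp

/-- For `x̃(t) = √(1-w)(sin wt, cos wt)` and `g(t,x) = (0, sin wt)`, the Melnikov function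
`M_E(θ) = ∫₀^{2π/w} det[x̃'(τ), g(τ-θ, x̃(τ))] dτ` equals `-π√(1-w) sin(wθ)` and has
exactly the two zeros `0` and `π/w` on `[0, 2π/w)`. -/
theorem melnikov_function_example (w : ℝ) (hw0 : 0 < w) (hw1 : w < 1) :
    (∀ θ : ℝ,
      (∫ τ in (0:ℝ)..(2 * π / w),
        ((w * Real.sqrt (1 - w) * Real.cos (w * τ)) * Real.sin (w * (τ - θ)) -
          (-(w * Real.sqrt (1 - w)) * Real.sin (w * τ)) * 0))
        = -(π * Real.sqrt (1 - w) * Real.sin (w * θ))) ∧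
    (∀ θ ∈ Set.Ico (0:ℝ) (2 * π / w),
      (-(π * Real.sqrt (1 - w) * Real.sin (w * θ)) = 0 ↔ θ = 0 ∨ θ = π / w)) := by
  have hsqrt : 0 < √(1 - w) := sqrt_pos.mpr (by linarith)
  refine ⟨fun θ => ?_, fun θ hθ => ?_⟩
  · simp only [mul_zero, sub_zero, mul_assoc (w * √(1 - w))]
    rw [intervalIntegral.integral_const_mul, integral_cos_mul_sin_sub_over_period hw0.ne']
    field_simp
  · have hwθ : w * θ ∈ Set.Ico 0 (2 * π) := by
      refine ⟨mul_nonneg hw0.le hθ.1, ?_⟩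
      calc w * θ < w * (2 * π / w) := mul_lt_mul_of_pos_left hθ.2 hw0
        _ = 2 * π := mul_div_cancel₀ _ hw0.ne'
    rw [neg_eq_zero, mul_eq_zero_iff_left (by positivity), sin_eq_zero_iff_of_mem_Ico hwθ,
      mul_eq_zero_iff_left hw0.ne', mul_comm, ← eq_div_iff hw0.ne']
end

section
/- Let w ∈ (0,1), T = 2π/w, x̃(t) = √(1-w)(sin wt, cos wt), ŷ(t) = (1/(w√(1-w)))·(-2(1-w)t cos(wt) + sin(wt), 2(1-w)t sin(wt) + cos(wt)), and g(t,x) = (0, sin wt). Then M_A^s(0) := -∫_{s-T}^{s} det[ ŷ(τ), g(τ, x̃(τ)) ] dτ = (π/(w³√(1-w)))·(2(1-w) sin²(ws) - 1), and M_A^s(π/w) = -(π/(w³√(1-w)))·(2(1-w) sin²(ws) - 1). -/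
/-!
Writing the integrand as `c (sin² wτ - a τ sin wτ cos wτ)`, its integral over one period
`T = 2π/w` is computed term by term: `sin²` contributes `T/2`, and since
`τ sin wτ cos wτ` has the antiderivative `sin 2wτ / 8w² - τ cos 2wτ / 4w`, whose
non-periodic part is `τ` times a `T`-periodic function, only `-T cos 2ws / 4w`
survives. The phase `θ = π/w` flips the sign of `sin (w (τ - θ))`, hence of the whole value.
-/

open Real

lemma integral_sin_mul_sq_over_period {w : ℝ} (hw : w ≠ 0) (s : ℝ) :
    ∫ τ in (s - 2 * π / w)..s, sin (w * τ) ^ 2 = π / w := by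
  rw [intervalIntegral.integral_comp_mul_left (fun x => sin x ^ 2) hw, integral_sin_sq,
    show w * (s - 2 * π / w) = w * s - 2 * π by field_simp, sin_sub_two_pi, cos_sub_two_pi]
  ring

lemma hasDerivAt_mul_sin_mul_cos_antideriv {w : ℝ} (hw : w ≠ 0) (τ : ℝ) :
    HasDerivAt (fun t => sin (2 * w * t) / (8 * w ^ 2) - t * cos (2 * w * t) / (4 * w))
      (τ * (sin (w * τ) * cos (w * τ))) τ := by
  have hlin : HasDerivAt (fun t => 2 * w * t) (2 * w) τ := by
    simpa using (hasDerivAt_id τ).const_mul (2 * w)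
  refine ((((hasDerivAt_sin _).comp τ hlin).div_const (8 * w ^ 2)).sub
    (((hasDerivAt_id τ).mul ((hasDerivAt_cos _).comp τ hlin)).div_const (4 * w))).congr_deriv ?_
  simp only [Function.comp_def, id]
  rw [mul_assoc, sin_two_mul]
  field_simp
  ring

lemma integral_mul_sin_mul_cos_over_period {w : ℝ} (hw : w ≠ 0) (s : ℝ) :
    ∫ τ in (s - 2 * π / w)..s, τ * (sin (w * τ) * cos (w * τ))
      = -(π * cos (2 * w * s)) / (2 * w ^ 2) := by
  rw [intervalIntegral.integral_eq_sub_of_hasDerivAt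
      (fun τ _ => hasDerivAt_mul_sin_mul_cos_antideriv hw τ)
      (by apply Continuous.intervalIntegrable; fun_prop),
    show 2 * w * (s - 2 * π / w) = 2 * w * s - 2 * π - 2 * π by field_simp; ring,
    sin_sub_two_pi, sin_sub_two_pi, cos_sub_two_pi, cos_sub_two_pi]
  field_simp
  ring

lemma integral_mul_sub_mul_cos_add_sin_mul_sin_over_period {w : ℝ} (hw : w ≠ 0) (a c s : ℝ) :
    ∫ τ in (s - 2 * π / w)..s, c * (-(a * τ * cos (w * τ)) + sin (w * τ)) * sin (w * τ)
      = c * (π / w + a * π * cos (2 * w * s) / (2 * w ^ 2)) := by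
  have hint (f : ℝ → ℝ) (hf : Continuous f) :
      IntervalIntegrable f MeasureTheory.volume (s - 2 * π / w) s :=
    hf.intervalIntegrable _ _
  calc ∫ τ in (s - 2 * π / w)..s, c * (-(a * τ * cos (w * τ)) + sin (w * τ)) * sin (w * τ)
      = ∫ τ in (s - 2 * π / w)..s,
          c * (sin (w * τ) ^ 2 - a * (τ * (sin (w * τ) * cos (w * τ)))) := by
        congr 1; ext τ; ring
    _ = c * (π / w + a * π * cos (2 * w * s) / (2 * w ^ 2)) := by
        rw [intervalIntegral.integral_const_mul,
          intervalIntegral.integral_sub (hint _ (by fun_prop)) (hint _ (by fun_prop)),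
          intervalIntegral.integral_const_mul,
          integral_sin_mul_sq_over_period hw, integral_mul_sin_mul_cos_over_period hw]
        ring

theorem MA_function_example_general (w : ℝ) (hw0 : 0 < w) (s : ℝ) :
    (-(∫ τ in (s - 2 * π / w)..s,
        ((1 / (w * Real.sqrt (1 - w)) * (-(2 * (1 - w) * τ * Real.cos (w * τ)) + Real.sin (w * τ)))
            * Real.sin (w * τ) -
          (1 / (w * Real.sqrt (1 - w)) * (2 * (1 - w) * τ * Real.sin (w * τ) + Real.cos (w * τ)))
            * 0))
      = π / (w ^ 3 * Real.sqrt (1 - w)) * (2 * (1 - w) * Real.sin (w * s) ^ 2 - 1)) ∧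
    (-(∫ τ in (s - 2 * π / w)..s,
        ((1 / (w * Real.sqrt (1 - w)) * (-(2 * (1 - w) * τ * Real.cos (w * τ)) + Real.sin (w * τ)))
            * Real.sin (w * (τ - π / w)) -
          (1 / (w * Real.sqrt (1 - w)) * (2 * (1 - w) * τ * Real.sin (w * τ) + Real.cos (w * τ)))
            * 0))
      = -(π / (w ^ 3 * Real.sqrt (1 - w)) * (2 * (1 - w) * Real.sin (w * s) ^ 2 - 1))) := by
  have hw : w ≠ 0 := hw0.ne'
  have h_shift (τ : ℝ) : sin (w * (τ - π / w)) = -sin (w * τ) := by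
    rw [mul_sub, mul_div_cancel₀ _ hw, sin_sub_pi]
  have h_value : -(1 / (w * √(1 - w)) * (π / w + 2 * (1 - w) * π * cos (2 * w * s) / (2 * w ^ 2)))
      = π / (w ^ 3 * √(1 - w)) * (2 * (1 - w) * sin (w * s) ^ 2 - 1) := by
    rw [show 2 * w * s = 2 * (w * s) by ring, cos_two_mul, cos_sq']
    field_simp
    ring
  simp only [mul_zero, sub_zero, h_shift, mul_neg, intervalIntegral.integral_neg, neg_neg,
    integral_mul_sub_mul_cos_add_sin_mul_sin_over_period hw]
  exact ⟨h_value, by rw [← h_value, neg_neg]⟩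

/-- For `ŷ(τ) = (1/(w√(1-w)))(-2(1-w)τ cos wτ + sin wτ, 2(1-w)τ sin wτ + cos wτ)`
and `g(t,x) = (0, sin wt)`:
`M_A^s(0) = -∫_{s-T}^s det[ŷ(τ), g(τ, x̃(τ))] dτ = (π/(w³√(1-w)))(2(1-w) sin²(ws) - 1)`
and `M_A^s(π/w)` equals the negative of that value, where `T = 2π/w`. -/
theorem MA_function_example (w : ℝ) (hw0 : 0 < w) (hw1 : w < 1) (s : ℝ) :
    (-(∫ τ in (s - 2 * π / w)..s,
        ((1 / (w * Real.sqrt (1 - w)) * (-(2 * (1 - w) * τ * Real.cos (w * τ)) + Real.sin (w * τ)))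
            * Real.sin (w * τ) -
          (1 / (w * Real.sqrt (1 - w)) * (2 * (1 - w) * τ * Real.sin (w * τ) + Real.cos (w * τ)))
            * 0))
      = π / (w ^ 3 * Real.sqrt (1 - w)) * (2 * (1 - w) * Real.sin (w * s) ^ 2 - 1)) ∧
    (-(∫ τ in (s - 2 * π / w)..s,
        ((1 / (w * Real.sqrt (1 - w)) * (-(2 * (1 - w) * τ * Real.cos (w * τ)) + Real.sin (w * τ)))
            * Real.sin (w * (τ - π / w)) -
          (1 / (w * Real.sqrt (1 - w)) * (2 * (1 - w) * τ * Real.sin (w * τ) + Real.cos (w * τ)))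
            * 0))
      = -(π / (w ^ 3 * Real.sqrt (1 - w)) * (2 * (1 - w) * Real.sin (w * s) ^ 2 - 1))) :=
  MA_function_example_general w hw0 s
end

section
/- Suppose a family of periodic orbits x(t, α) of the planar C¹ system x' = f(x) depends C¹ on α, with periods T(α) and initial conditions x(0, α) = (0, J(α)). If at α₀ one has T'(α₀) = 0, J'(α₀) ≠ 0, and the first component of x'_t(0, α₀) is nonzero, then every solution of the variational system y' = f'(x(t, α₀)) y is T(α₀)-periodic. -/
open Matrix

/-!
Both `v t = f (x t α₀)` (the `t`-derivative of the orbit) and `w t = ∂_α x (t, α₀)` solve the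
variational system: `v` by the chain rule, `w` by differentiating the integral equation
`x t α = x 0 α + ∫₀ᵗ f (x s α) ds` under the integral sign. Both are `T(α₀)`-periodic: `v`
trivially, `w` by differentiating `x (t + T α) α = x t α` in `α`, where `T'(α₀) = 0` kills the
contribution of the shifted time. Their initial values `f (x 0 α₀)` and `(0, J'(α₀))` are linearly
independent, so by uniqueness for linear equations every solution is a combination of `v` and `w`.
-/

open Function Set

section Family

variable {E : Type*} [NormedAddCommGroup E] [NormedSpace ℝ E] {f : E → E} {x : ℝ → ℝ → E}

theorem hasDerivAt_snd_fderiv_uncurry (hx : Differentiable ℝ (uncurry x)) (t α : ℝ) :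
    HasDerivAt (x t) (fderiv ℝ (uncurry x) (t, α) (0, 1)) α :=
  (hx (t, α)).hasFDerivAt.comp_hasDerivAt α ((hasDerivAt_const α t).prodMk (hasDerivAt_id α))

theorem hasDerivAt_deriv_snd (hx : Differentiable ℝ (uncurry x)) (t α : ℝ) :
    HasDerivAt (x t) (deriv (x t) α) α :=
  (hasDerivAt_snd_fderiv_uncurry hx t α).differentiableAt.hasDerivAt

theorem continuous_deriv_snd (hx : ContDiff ℝ 1 (uncurry x)) :
    Continuous fun p : ℝ × ℝ => deriv (x p.1) p.2 := by
  simp_rw [fun p : ℝ × ℝ =>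
    (hasDerivAt_snd_fderiv_uncurry (hx.differentiable one_ne_zero) p.1 p.2).deriv]
  exact (hx.continuous_fderiv one_ne_zero).clm_apply continuous_const

theorem hasDerivAt_comp_deriv_snd (hf : ContDiff ℝ 1 f) (hx : Differentiable ℝ (uncurry x))
    (s α : ℝ) : HasDerivAt (fun α => f (x s α)) (fderiv ℝ f (x s α) (deriv (x s) α)) α :=
  (hf.differentiable one_ne_zero _).hasFDerivAt.comp_hasDerivAt α (hasDerivAt_deriv_snd hx s α)

theorem periodic_deriv_snd (hx : Differentiable ℝ (uncurry x)) {T : ℝ → ℝ} {α₀ : ℝ}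
    (hper : ∀ t α, x (t + T α) α = x t α) (hT : HasDerivAt T 0 α₀) :
    Periodic (fun t => deriv (x t) α₀) (T α₀) := by
  intro t
  have hshift : HasDerivAt (fun α => x (t + T α) α)
      (fderiv ℝ (uncurry x) (t + T α₀, α₀) (0, 1)) α₀ := by
    have hbase : HasDerivAt (fun α => (t + T α, α)) ((0 : ℝ), (1 : ℝ)) α₀ :=
      (by simpa using hT.const_add t : HasDerivAt (fun α => t + T α) 0 α₀).prodMk
        (hasDerivAt_id α₀)
    exact (hx _).hasFDerivAt.comp_hasDerivAt α₀ hbase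
  simp only [hper] at hshift
  exact (hasDerivAt_snd_fderiv_uncurry hx _ _).deriv.trans hshift.deriv.symm

theorem hasDerivAt_intervalIntegral_of_contDiff {G : ℝ → ℝ → E}
    (hG : ContDiff ℝ 1 (uncurry G)) (a b α₀ : ℝ) :
    HasDerivAt (fun α => ∫ s in a..b, G s α) (∫ s in a..b, deriv (G s) α₀) α₀ := by
  have hGc (α : ℝ) : Continuous fun s => G s α :=
    hG.continuous.comp (continuous_id.prodMk continuous_const)
  have hG'c : Continuous fun p : ℝ × ℝ => deriv (G p.1) p.2 := continuous_deriv_snd hG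
  obtain ⟨C, hC⟩ := (isCompact_uIcc.prod (isCompact_closedBall α₀ 1)).exists_bound_of_continuousOn
    hG'c.continuousOn
  exact (intervalIntegral.hasDerivAt_integral_of_dominated_loc_of_deriv_le
    (F := fun α s => G s α) (bound := fun _ => C) (Metric.ball_mem_nhds α₀ one_pos)
    (.of_forall fun α => (hGc α).aestronglyMeasurable) ((hGc α₀).intervalIntegrable a b)
    (hG'c.comp (continuous_id.prodMk continuous_const)).aestronglyMeasurable
    (.of_forall fun s hs α hα =>
      hC (s, α) ⟨uIoc_subset_uIcc hs, Metric.ball_subset_closedBall hα⟩)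
    intervalIntegrable_const
    (.of_forall fun s _ α _ => hasDerivAt_deriv_snd (hG.differentiable one_ne_zero) s α)).2

theorem deriv_snd_eq_add_integral [CompleteSpace E] (hf : ContDiff ℝ 1 f)
    (hx : ContDiff ℝ 1 (uncurry x)) (hsol : ∀ t α, HasDerivAt (fun s => x s α) (f (x t α)) t)
    (α₀ t : ℝ) :
    deriv (x t) α₀ = deriv (x 0) α₀ + ∫ s in 0..t, fderiv ℝ f (x s α₀) (deriv (x s) α₀) := by
  have hxd := hx.differentiable one_ne_zero
  have hfx : ContDiff ℝ 1 (uncurry fun s α => f (x s α)) := hf.comp hx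
  have hFTC (α : ℝ) : x t α - x 0 α = ∫ s in 0..t, f (x s α) :=
    (intervalIntegral.integral_eq_sub_of_hasDerivAt (fun s _ => hsol s α)
      ((hfx.continuous.comp (continuous_id.prodMk continuous_const)).intervalIntegrable 0 t)).symm
  have hdiff : HasDerivAt (fun α => x t α - x 0 α) (deriv (x t) α₀ - deriv (x 0) α₀) α₀ :=
    (hasDerivAt_deriv_snd hxd t α₀).sub (hasDerivAt_deriv_snd hxd 0 α₀)
  simp only [hFTC] at hdiff
  have hint := hasDerivAt_intervalIntegral_of_contDiff hfx 0 t α₀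
  simp only [fun s => (hasDerivAt_comp_deriv_snd hf hxd s α₀).deriv] at hint
  rw [← hdiff.unique hint, add_sub_cancel]

theorem hasDerivAt_deriv_snd_of_solution_family [CompleteSpace E] (hf : ContDiff ℝ 1 f)
    (hx : ContDiff ℝ 1 (uncurry x)) (hsol : ∀ t α, HasDerivAt (fun s => x s α) (f (x t α)) t)
    (α₀ t : ℝ) :
    HasDerivAt (fun s => deriv (x s) α₀) (fderiv ℝ f (x t α₀) (deriv (x t) α₀)) t := by
  have hg : Continuous fun s => fderiv ℝ f (x s α₀) (deriv (x s) α₀) :=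
    ((hf.continuous_fderiv one_ne_zero).comp
      (hx.continuous.comp (continuous_id.prodMk continuous_const))).clm_apply
      ((continuous_deriv_snd hx).comp (continuous_id.prodMk continuous_const))
  have hw : (fun s => deriv (x s) α₀) = fun s =>
      deriv (x 0) α₀ + ∫ r in 0..s, fderiv ℝ f (x r α₀) (deriv (x r) α₀) :=
    funext (deriv_snd_eq_add_integral hf hx hsol α₀)
  rw [hw]
  exact (hg.integral_hasStrictDerivAt 0 t).hasDerivAt.const_add _

theorem ODE_solution_unique_univ_of_linear {A : ℝ → E →L[ℝ] E} (hA : Continuous A)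
    {u v : ℝ → E} (hu : ∀ t, HasDerivAt u (A t (u t)) t) (hv : ∀ t, HasDerivAt v (A t (v t)) t)
    {t₀ : ℝ} (heq : u t₀ = v t₀) : u = v := by
  ext t
  obtain ⟨a, b, ht, ht₀⟩ : ∃ a b, t ∈ Ioo a b ∧ t₀ ∈ Ioo a b :=
    ⟨min t t₀ - 1, max t t₀ + 1, by grind, by grind⟩
  obtain ⟨C, hC⟩ := (isCompact_Icc (a := a) (b := b)).exists_bound_of_continuousOn hA.continuousOn
  have hlip (s : ℝ) (hs : s ∈ Ioo a b) : LipschitzOnWith C.toNNReal (A s) univ := by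
    refine ((A s).lipschitz.weaken ?_).lipschitzOnWith
    rw [← NNReal.coe_le_coe, Real.coe_toNNReal', coe_nnnorm]
    exact le_max_of_le_left (hC s (Ioo_subset_Icc_self hs))
  exact ODE_solution_unique_of_mem_Ioo hlip ht₀
    (fun s _ => ⟨hu s, trivial⟩) (fun s _ => ⟨hv s, trivial⟩) heq ht

end Family

theorem exists_smul_add_smul_vecCons_zero {u : Fin 2 → ℝ} (hu : u 0 ≠ 0) {j : ℝ} (hj : j ≠ 0)
    (z : Fin 2 → ℝ) : ∃ a b : ℝ, a • u + b • ![0, j] = z := by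
  refine ⟨z 0 / u 0, (z 1 - z 0 / u 0 * u 1) / j, ?_⟩
  ext i
  fin_cases i
  · simp [hu]
  · simp [hj]

/-- If a family of periodic orbits `x(·,α)` of `x' = f(x)` with periods `T(α)` and
initial conditions `x(0,α) = (0, J(α))` satisfies `T'(α₀) = 0`, `J'(α₀) ≠ 0` and
the first component of `x'_t(0,α₀) = f(x(0,α₀))` is nonzero, then every solution of the
variational system `y' = f'(x(t,α₀)) y` is `T(α₀)`-periodic. -/
theorem critical_period_degenerate_cycle
    (f : (Fin 2 → ℝ) → Fin 2 → ℝ) (hf : ContDiff ℝ 1 f)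
    (f' : (Fin 2 → ℝ) → Matrix (Fin 2) (Fin 2) ℝ)
    (hf' : ∀ ξ, HasFDerivAt f (LinearMap.toContinuousLinearMap (f' ξ).mulVecLin) ξ)
    (x : ℝ → ℝ → Fin 2 → ℝ)
    (hxC1 : ContDiff ℝ 1 fun p : ℝ × ℝ => x p.1 p.2)
    (T J : ℝ → ℝ) (α₀ : ℝ)
    (hsol : ∀ t α, HasDerivAt (fun s => x s α) (f (x t α)) t)
    (hper : ∀ t α, x (t + T α) α = x t α)
    (hinit : ∀ α, x 0 α = ![0, J α])
    (hT : HasDerivAt T 0 α₀)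
    (j : ℝ) (hJ : HasDerivAt J j α₀) (hj : j ≠ 0)
    (hfirst : f (x 0 α₀) 0 ≠ 0) :
    ∀ y : ℝ → Fin 2 → ℝ,
      (∀ t, HasDerivAt y ((f' (x t α₀)).mulVec (y t)) t) →
      ∀ t, y (t + T α₀) = y t := by
  intro y hy
  set A : ℝ → (Fin 2 → ℝ) →L[ℝ] Fin 2 → ℝ := fun t => fderiv ℝ f (x t α₀)
  have hA : Continuous A := (hf.continuous_fderiv one_ne_zero).comp
    (hxC1.continuous.comp (continuous_id.prodMk continuous_const))
  have hy' (t : ℝ) : HasDerivAt y (A t (y t)) t := by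
    convert hy t using 1
    simp [A, (hf' _).fderiv]
  set v := fun t => f (x t α₀)
  set w := fun t => deriv (x t) α₀
  have hv (t : ℝ) : HasDerivAt v (A t (v t)) t :=
    (hf.differentiable one_ne_zero _).hasFDerivAt.comp_hasDerivAt t (hsol t α₀)
  have hw : ∀ t, HasDerivAt w (A t (w t)) t :=
    hasDerivAt_deriv_snd_of_solution_family hf hxC1 hsol α₀
  have hw0 : w 0 = ![0, j] := by
    refine HasDerivAt.deriv ?_
    rw [funext hinit, hasDerivAt_pi]
    intro i
    fin_cases i
    · simpa using hasDerivAt_const α₀ (0 : ℝ)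
    · simpa using hJ
  obtain ⟨a, b, hab⟩ := exists_smul_add_smul_vecCons_zero hfirst hj (y 0)
  have hy_eq : y = a • v + b • w := by
    refine ODE_solution_unique_univ_of_linear hA hy' (fun t => ?_) (t₀ := 0) ?_
    · convert ((hv t).const_smul a).add ((hw t).const_smul b) using 1
      simp only [Pi.add_apply, Pi.smul_apply, map_add, map_smul]
    · simp [← hab, ← hw0, v]
  have hv_per : Periodic v (T α₀) := fun t => by simp only [v, hper]
  rw [hy_eq]
  exact (hv_per.smul a).add ((periodic_deriv_snd (hxC1.differentiable one_ne_zero) hper hT).smul b)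
end

section
/- For the system x₁' = x₂·(¼(x₁²+x₂²-2)^p + 1), x₂' = -x₁·(¼(x₁²+x₂²-2)^p + 1) (p ∈ ℕ, p ≥ 1), the curves x̃_α(t) = α(sin(2πt/T(α)), cos(2πt/T(α))) with T(α) = 2π/(¼(α²-2)^p + 1) are periodic solutions, and at α₀ = √2 one has T(√2) = 2π, the derivatives T'(√2) = ⋯ = T^{(p-1)}(√2) = 0, and T^{(p)}(√2) ≠ 0. -/
/-!
Along the circle of radius `α` the factor `¼(x₁² + x₂² - 2)^p + 1` is the constant
`ω(α) = 2π / T(α)`, so the system is a uniform rotation with angular speed `ω(α)`.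
Near `α = √2` the factorisation `α² - 2 = (α - √2)(α + √2)` gives
`T(α) = 2π + (α - √2)^p · R(α)` with `R` smooth and `R(√2) = -(π/2)(2√2)^p ≠ 0`; by the
Leibniz rule the `k`-th derivative of `(α - √2)^p · R(α)` at `√2` vanishes for `k < p` and
equals `p! · R(√2)` for `k = p`.
-/

open Real

/-- Period function of the Yagasaki-type example: `T(α) = 2π/(¼(α²-2)^p + 1)`. -/
noncomputable def Tper (p : ℕ) (α : ℝ) : ℝ := 2 * π / ((α ^ 2 - 2) ^ p / 4 + 1)

/-- Right-hand side of the system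
`x₁' = x₂(¼(x₁²+x₂²-2)^p + 1)`, `x₂' = -x₁(¼(x₁²+x₂²-2)^p + 1)`. -/
noncomputable def yagRHS (p : ℕ) (v : Fin 2 → ℝ) : Fin 2 → ℝ :=
  ![v 1 * ((v 0 ^ 2 + v 1 ^ 2 - 2) ^ p / 4 + 1),
    -(v 0) * ((v 0 ^ 2 + v 1 ^ 2 - 2) ^ p / 4 + 1)]

open Filter Topology
open scoped Nat

section PowerFactor

variable {𝕜 : Type*} [NontriviallyNormedField 𝕜] {a : 𝕜} {m k : ℕ} {u : 𝕜 → 𝕜}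

lemma iteratedDeriv_pow_sub_self (i : ℕ) :
    iteratedDeriv i (fun x => (x - a) ^ m) a = if i = m then (m ! : 𝕜) else 0 := by
  rw [congrFun (iteratedDeriv_comp_sub_const i (· ^ m) a) a, sub_self, iteratedDeriv_fun_pow_zero,
    Nat.cast_ite, Nat.cast_zero]

lemma iteratedDeriv_pow_sub_mul_of_lt (hu : ContDiffAt 𝕜 k u a) (hkm : k < m) :
    iteratedDeriv k (fun x => (x - a) ^ m * u x) a = 0 := by
  rw [iteratedDeriv_fun_mul (by fun_prop) hu]
  refine Finset.sum_eq_zero fun i hi => ?_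
  rw [iteratedDeriv_pow_sub_self, if_neg (by grind)]
  simp

lemma iteratedDeriv_pow_sub_mul_self (hu : ContDiffAt 𝕜 m u a) :
    iteratedDeriv m (fun x => (x - a) ^ m * u x) a = m ! * u a := by
  rw [iteratedDeriv_fun_mul (by fun_prop) hu, Finset.sum_range_succ,
    Finset.sum_eq_zero fun i hi => ?_]
  · simp [iteratedDeriv_pow_sub_self]
  · rw [iteratedDeriv_pow_sub_self, if_neg (by grind)]
    simp

end PowerFactor

noncomputable def angFreq (p : ℕ) (α : ℝ) : ℝ := (α ^ 2 - 2) ^ p / 4 + 1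

lemma two_pi_div_Tper (p : ℕ) (α : ℝ) : 2 * π / Tper p α = angFreq p α :=
  div_div_cancel₀ two_pi_pos.ne'

lemma hasDerivAt_circle (α ω t : ℝ) :
    HasDerivAt (fun s => ![α * sin (ω * s), α * cos (ω * s)])
      ![ω * (α * cos (ω * t)), -(ω * (α * sin (ω * t)))] t := by
  refine hasDerivAt_pi.2 fun i => ?_
  fin_cases i
  · simpa [mul_comm, mul_left_comm] using
      (((hasDerivAt_id t).const_mul ω).sin).const_mul α
  · simpa [mul_comm, mul_left_comm] using
      (((hasDerivAt_id t).const_mul ω).cos).const_mul α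

lemma circle_periodic (α : ℝ) {ω : ℝ} (hω : ω ≠ 0) :
    Function.Periodic (fun s => ![α * sin (ω * s), α * cos (ω * s)]) (2 * π / ω) := by
  intro t
  simp only [mul_add, mul_div_cancel₀ _ hω, sin_add_two_pi, cos_add_two_pi]

lemma yagRHS_circle (p : ℕ) (α θ : ℝ) :
    yagRHS p ![α * sin θ, α * cos θ]
      = ![angFreq p α * (α * cos θ), -(angFreq p α * (α * sin θ))] := by
  have hradius : (α * sin θ) ^ 2 + (α * cos θ) ^ 2 = α ^ 2 := by
    linear_combination α ^ 2 * sin_sq_add_cos_sq θ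
  ext i
  fin_cases i <;> simp [yagRHS, angFreq, hradius] <;> ring

lemma angFreq_sqrt_two_pos (p : ℕ) : 0 < angFreq p √2 := by
  simp only [angFreq, Real.sq_sqrt zero_le_two, sub_self]
  positivity

lemma Tper_sqrt_two {p : ℕ} (hp : p ≠ 0) : Tper p √2 = 2 * π := by
  simp [Tper, zero_pow hp]

noncomputable def TperCofactor (p : ℕ) (x : ℝ) : ℝ := -(π / 2) * (x + √2) ^ p / angFreq p x

lemma Tper_eventuallyEq (p : ℕ) :
    Tper p =ᶠ[𝓝 √2] fun x => 2 * π + (x - √2) ^ p * TperCofactor p x := by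
  have hcont : Continuous (angFreq p) := by unfold angFreq; fun_prop
  filter_upwards [hcont.continuousAt.eventually_ne (angFreq_sqrt_two_pos p).ne'] with x hx
  have hfactor : (x - √2) ^ p * (x + √2) ^ p = (x ^ 2 - 2) ^ p := by
    rw [← mul_pow]
    congr 1
    linear_combination -Real.sq_sqrt zero_le_two
  have hA : (x ^ 2 - 2) ^ p = 4 * (angFreq p x - 1) := by unfold angFreq; ring
  change 2 * π / angFreq p x = 2 * π + (x - √2) ^ p * (-(π / 2) * (x + √2) ^ p / angFreq p x)
  field_simp
  linear_combination hfactor + hA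

lemma contDiffAt_TperCofactor (p n : ℕ) : ContDiffAt ℝ n (TperCofactor p) √2 := by
  unfold TperCofactor
  exact (contDiffAt_const.mul ((contDiffAt_id.add contDiffAt_const).pow p)).div
    (by unfold angFreq; fun_prop) (angFreq_sqrt_two_pos p).ne'

lemma iteratedDeriv_Tper_sqrt_two {p k : ℕ} (hk : 0 < k) :
    iteratedDeriv k (Tper p) √2
      = iteratedDeriv k (fun x => (x - √2) ^ p * TperCofactor p x) √2 := by
  rw [(Tper_eventuallyEq p).iteratedDeriv_eq, iteratedDeriv_const_add hk]

lemma TperCofactor_sqrt_two_ne_zero (p : ℕ) : TperCofactor p √2 ≠ 0 :=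
  div_ne_zero (mul_ne_zero (by simp [pi_ne_zero]) (by positivity))
    (angFreq_sqrt_two_pos p).ne'

/-- The curves `x̃_α(t) = α(sin(2πt/T(α)), cos(2πt/T(α)))` are `T(α)`-periodic solutions
of the system, and at `α₀ = √2`: `T(√2) = 2π`, `T'(√2) = ⋯ = T^{(p-1)}(√2) = 0`, and
`T^{(p)}(√2) ≠ 0`. -/
theorem yagasaki_example_critical_period (p : ℕ) (hp : 1 ≤ p) :
    (∀ α : ℝ, (α ^ 2 - 2) ^ p / 4 + 1 ≠ 0 →
      (∀ t : ℝ, HasDerivAt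
          (fun s => ![α * Real.sin (2 * π / Tper p α * s), α * Real.cos (2 * π / Tper p α * s)])
          (yagRHS p ![α * Real.sin (2 * π / Tper p α * t), α * Real.cos (2 * π / Tper p α * t)])
          t) ∧
      (∀ t : ℝ,
        (![α * Real.sin (2 * π / Tper p α * (t + Tper p α)),
            α * Real.cos (2 * π / Tper p α * (t + Tper p α))] : Fin 2 → ℝ)
          = ![α * Real.sin (2 * π / Tper p α * t), α * Real.cos (2 * π / Tper p α * t)])) ∧
    Tper p (Real.sqrt 2) = 2 * π ∧
    (∀ k : ℕ, 1 ≤ k → k ≤ p - 1 → iteratedDeriv k (Tper p) (Real.sqrt 2) = 0) ∧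
    iteratedDeriv p (Tper p) (Real.sqrt 2) ≠ 0 := by
  refine ⟨fun α hα => ⟨fun t => ?_, fun t => ?_⟩, Tper_sqrt_two (by omega),
    fun k hk hkp => ?_, ?_⟩
  · rw [two_pi_div_Tper, yagRHS_circle]
    exact hasDerivAt_circle α _ t
  · rw [two_pi_div_Tper]
    exact circle_periodic α hα t
  · rw [iteratedDeriv_Tper_sqrt_two hk]
    exact iteratedDeriv_pow_sub_mul_of_lt (contDiffAt_TperCofactor p k) (by omega)
  · rw [iteratedDeriv_Tper_sqrt_two hp,
      iteratedDeriv_pow_sub_mul_self (contDiffAt_TperCofactor p p)]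
    exact mul_ne_zero (by positivity) (TperCofactor_sqrt_two_ne_zero p)
end
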